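/- arXiv:1610.03956 — 9 statements merged into one kernel-verified Lean document; each statement's English description precedes it below -/
import Mathlib

section
/- Let γ > 0, 0 < B < 1 and v_S = (v_{S1}, v_{S2}), v_L = (v_{L1}, v_{L2}) ∈ ℝ². Then the diagonal matrix S₀ = diag(γ/B, B, B, 1−B, 1−B) is symmetric positive definite, and both products S₀·A₁(u) and S₀·A₂(u) are symmetric 5×5 matrices. In particular, the first-order part of the two-phase system in the variables u = (B, v_S, v_L) is Friedrichs-symmetrizable. -/
open Matrix

/-- The flux matrix `A₁(u)` of the two-phase system in the variables `u = (B, v_S, v_L)`. -/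
noncomputable def A1 (γ B vS1 vL1 : ℝ) : Matrix (Fin 5) (Fin 5) ℝ :=
  !![vS1, B, 0, 0, 0;
     γ / B, vS1, 0, 0, 0;
     0, 0, vS1, 0, 0;
     0, 0, 0, vL1, 0;
     0, 0, 0, 0, vL1]

/-- The flux matrix `A₂(u)` of the two-phase system in the variables `u = (B, v_S, v_L)`. -/
noncomputable def A2 (γ B vS2 vL2 : ℝ) : Matrix (Fin 5) (Fin 5) ℝ :=
  !![vS2, 0, B, 0, 0;
     0, vS2, 0, 0, 0;
     γ / B, 0, vS2, 0, 0;
     0, 0, 0, vL2, 0;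
     0, 0, 0, 0, vL2]

/-- The Friedrichs symmetrizer `S₀ = diag(γ/B, B, B, 1−B, 1−B)` is symmetric positive
definite, and `S₀·A₁(u)` and `S₀·A₂(u)` are symmetric: the first-order part of the
two-phase system in the variables `u = (B, v_S, v_L)` is Friedrichs-symmetrizable. -/
theorem stmt0 (γ B vS1 vS2 vL1 vL2 : ℝ) (hγ : 0 < γ) (hB0 : 0 < B) (hB1 : B < 1) :
    (Matrix.diagonal ![γ / B, B, B, 1 - B, 1 - B]).PosDef ∧
    (Matrix.diagonal ![γ / B, B, B, 1 - B, 1 - B] * A1 γ B vS1 vL1).IsSymm ∧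
    (Matrix.diagonal ![γ / B, B, B, 1 - B, 1 - B] * A2 γ B vS2 vL2).IsSymm := by
  have hB : B ≠ 0 := ne_of_gt hB0
  refine ⟨?_, ?_, ?_⟩
  · apply Matrix.posDef_diagonal_iff.mpr
    intro i
    fin_cases i <;> simp [Matrix.vecHead, Matrix.vecTail] <;>
      first | positivity | linarith
  · rw [Matrix.IsSymm]
    ext i j
    rw [Matrix.transpose_apply, Matrix.diagonal_mul, Matrix.diagonal_mul]
    fin_cases i <;> fin_cases j <;>
      simp [A1, Matrix.vecHead, Matrix.vecTail, div_mul_cancel₀, hB, mul_comm]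
  · rw [Matrix.IsSymm]
    ext i j
    rw [Matrix.transpose_apply, Matrix.diagonal_mul, Matrix.diagonal_mul]
    fin_cases i <;> fin_cases j <;>
      simp [A2, Matrix.vecHead, Matrix.vecTail, div_mul_cancel₀, hB, mul_comm]
end

section
/- Let γ > 0, v = (B, w, z) with B ≠ 0, and ξ = (ξ₁, ξ₂) ∈ ℝ². Then the characteristic polynomial of Ã(ξ, v) factors as det(λI₅ − Ã(ξ, v)) = (λ − (w − Bz)·ξ)² · (λ − (w + (1−B)z)·ξ) · ((λ − (w + (1−B)z)·ξ)² − γ|ξ|²). In particular all eigenvalues of Ã(ξ, v) are real, namely (w − Bz)·ξ (with multiplicity two), (w + (1−B)z)·ξ, and (w + (1−B)z)·ξ ± √γ·|ξ|. -/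
open Matrix

/-- The flux matrix `Ã₁(v)` of the two-phase system in the variables `v = (B, w, z)`. -/
noncomputable def At1 (γ B w1 w2 z1 z2 : ℝ) : Matrix (Fin 5) (Fin 5) ℝ :=
  !![w1 + z1 * (1 - 2 * B), B, 0, B * (1 - B), 0;
     γ + z1 ^ 2 * (1 - 2 * B), w1 + B * z1, 0, 2 * B * z1 * (1 - B), 0;
     z1 * z2 * (1 - 2 * B), B * z2, w1, B * z2 * (1 - B), B * z1 * (1 - B);
     γ / B - z1 ^ 2, z1, 0, w1 + z1 * (1 - 2 * B), 0;
     -(z1 * z2), 0, z1, 0, w1 + z1 * (1 - 2 * B)]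

/-- The flux matrix `Ã₂(v)` of the two-phase system in the variables `v = (B, w, z)`. -/
noncomputable def At2 (γ B w1 w2 z1 z2 : ℝ) : Matrix (Fin 5) (Fin 5) ℝ :=
  !![w2 + z2 * (1 - 2 * B), 0, B, 0, B * (1 - B);
     z1 * z2 * (1 - 2 * B), w2, B * z1, B * z2 * (1 - B), B * z1 * (1 - B);
     γ + z2 ^ 2 * (1 - 2 * B), 0, w2 + B * z2, 0, 2 * B * z2 * (1 - B);
     -(z1 * z2), z2, 0, w2 + z2 * (1 - 2 * B), 0;
     γ / B - z2 ^ 2, 0, z2, 0, w2 + z2 * (1 - 2 * B)]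

/-- The symbol `Ã(ξ, v) = ξ₁Ã₁(v) + ξ₂Ã₂(v)`. -/
noncomputable def At (γ B w1 w2 z1 z2 ξ1 ξ2 : ℝ) : Matrix (Fin 5) (Fin 5) ℝ :=
  ξ1 • At1 γ B w1 w2 z1 z2 + ξ2 • At2 γ B w1 w2 z1 z2

/-!
Cofactor expansion computes `det (λ • 1 - Ã(ξ, v))` outright once the entries `γ / B` are
cleared. As this is the characteristic polynomial evaluated at `λ`, the factorisation holds in
`ℝ[X]`; it survives base change to `ℂ`, where the spectrum is the root set of the characteristic
polynomial, and with `s = √γ |ξ|` the quadratic factor splits as `(X - (b - s)) (X - (b + s))`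
for `b = (w + (1 - B) z) · ξ`.
-/

open Polynomial

theorem det_smul_one_sub_At (γ B w1 w2 z1 z2 ξ1 ξ2 lam : ℝ) (hB : B ≠ 0) :
    (lam • (1 : Matrix (Fin 5) (Fin 5) ℝ) - At γ B w1 w2 z1 z2 ξ1 ξ2).det =
      (lam - ((w1 - B * z1) * ξ1 + (w2 - B * z2) * ξ2)) ^ 2 *
      (lam - ((w1 + (1 - B) * z1) * ξ1 + (w2 + (1 - B) * z2) * ξ2)) *
      ((lam - ((w1 + (1 - B) * z1) * ξ1 + (w2 + (1 - B) * z2) * ξ2)) ^ 2 -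
        γ * (ξ1 ^ 2 + ξ2 ^ 2)) := by
  simp [At, At1, At2, det_succ_row_zero, Fin.sum_univ_succ, Fin.succAbove, one_apply]
  field_simp
  ring

theorem charpoly_At (γ B w1 w2 z1 z2 ξ1 ξ2 : ℝ) (hB : B ≠ 0) :
    (At γ B w1 w2 z1 z2 ξ1 ξ2).charpoly =
      (X - C ((w1 - B * z1) * ξ1 + (w2 - B * z2) * ξ2)) ^ 2 *
      (X - C ((w1 + (1 - B) * z1) * ξ1 + (w2 + (1 - B) * z2) * ξ2)) *
      ((X - C ((w1 + (1 - B) * z1) * ξ1 + (w2 + (1 - B) * z2) * ξ2)) ^ 2 -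
        C (γ * (ξ1 ^ 2 + ξ2 ^ 2))) := by
  refine Polynomial.funext fun lam => ?_
  rw [eval_charpoly, scalar_apply, ← smul_one_eq_diagonal,
    det_smul_one_sub_At _ _ _ _ _ _ _ _ _ hB]
  simp

theorem Matrix.spectrum_map_eq_setOf_isRoot {n K L : Type*} [Fintype n] [DecidableEq n]
    [Field K] [Field L] (A : Matrix n n K) (f : K →+* L) :
    spectrum L (A.map f) = {μ | (A.charpoly.map f).IsRoot μ} := by
  ext μ
  rw [mem_spectrum_iff_isRoot_charpoly, ← charpoly_map]
  rfl

/-- The characteristic polynomial of `Ã(ξ, v)` factors as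
`(λ − (w−Bz)·ξ)² (λ − (w+(1−B)z)·ξ) ((λ − (w+(1−B)z)·ξ)² − γ|ξ|²)`; in particular all
(complex) eigenvalues of `Ã(ξ, v)` are real, namely `(w−Bz)·ξ` (with multiplicity two),
`(w+(1−B)z)·ξ`, and `(w+(1−B)z)·ξ ± √γ·|ξ|`. -/
theorem stmt1 (γ B w1 w2 z1 z2 ξ1 ξ2 : ℝ) (hγ : 0 < γ) (hB : B ≠ 0) :
    (∀ lam : ℝ,
      (lam • (1 : Matrix (Fin 5) (Fin 5) ℝ) - At γ B w1 w2 z1 z2 ξ1 ξ2).det =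
        (lam - ((w1 - B * z1) * ξ1 + (w2 - B * z2) * ξ2)) ^ 2 *
        (lam - ((w1 + (1 - B) * z1) * ξ1 + (w2 + (1 - B) * z2) * ξ2)) *
        ((lam - ((w1 + (1 - B) * z1) * ξ1 + (w2 + (1 - B) * z2) * ξ2)) ^ 2 -
          γ * (ξ1 ^ 2 + ξ2 ^ 2))) ∧
    spectrum ℂ ((At γ B w1 w2 z1 z2 ξ1 ξ2).map (Complex.ofReal)) =
      {(((w1 - B * z1) * ξ1 + (w2 - B * z2) * ξ2 : ℝ) : ℂ),
       (((w1 + (1 - B) * z1) * ξ1 + (w2 + (1 - B) * z2) * ξ2 : ℝ) : ℂ),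
       (((w1 + (1 - B) * z1) * ξ1 + (w2 + (1 - B) * z2) * ξ2
          - Real.sqrt γ * Real.sqrt (ξ1 ^ 2 + ξ2 ^ 2) : ℝ) : ℂ),
       (((w1 + (1 - B) * z1) * ξ1 + (w2 + (1 - B) * z2) * ξ2
          + Real.sqrt γ * Real.sqrt (ξ1 ^ 2 + ξ2 ^ 2) : ℝ) : ℂ)} := by
  refine ⟨fun lam => det_smul_one_sub_At γ B w1 w2 z1 z2 ξ1 ξ2 lam hB, ?_⟩
  refine (spectrum_map_eq_setOf_isRoot _ Complex.ofRealHom).trans ?_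
  rw [charpoly_At γ B w1 w2 z1 z2 ξ1 ξ2 hB]
  set a := (w1 - B * z1) * ξ1 + (w2 - B * z2) * ξ2
  set b := (w1 + (1 - B) * z1) * ξ1 + (w2 + (1 - B) * z2) * ξ2
  set s := Real.sqrt γ * Real.sqrt (ξ1 ^ 2 + ξ2 ^ 2)
  have hs : γ * (ξ1 ^ 2 + ξ2 ^ 2) = s ^ 2 := by
    rw [mul_pow, Real.sq_sqrt hγ.le, Real.sq_sqrt (by positivity)]
  have hquad : (X - C b) ^ 2 - C (s ^ 2) = (X - C (b - s)) * (X - C (b + s)) := by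
    simp only [map_sub, map_add, map_pow]; ring
  rw [hs, hquad]
  clear_value a b s
  ext μ
  simp [sub_eq_zero, or_assoc]
end

section
/- Let γ > 0, v = (B, w, z) with B ≠ 0, and ξ ∈ ℝ² ∖ {0}. Then Ã(ξ, v)·U(ξ) = U(ξ)·D(ξ), where D(ξ) = diag((w−Bz)·ξ, (w−Bz)·ξ, (w+(1−B)z)·ξ, (w+(1−B)z)·ξ − √γ|ξ|, (w+(1−B)z)·ξ + √γ|ξ|). In other words, the columns of U(ξ) are eigenvectors of Ã(ξ, v) with the listed real eigenvalues. -/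
/-!
Up to the factor `|ξ|⁻¹`, every column of `U(ξ)` is one of three kinds of eigenvector of
`Ã(ξ, v)`: the two vectors `(0, -(1-B), 0, 1, 0)` and `(0, 0, -(1-B), 0, 1)`
for `(w - Bz)·ξ`, the shear vector `(0, -Bξ₂, Bξ₁, -ξ₂, ξ₁)` for `(w + (1-B)z)·ξ`, and the
acoustic vector `(Bσ/γ, B(ξ + zσ/γ), ξ)` for `(w + (1-B)z)·ξ + σ`, which only needs
`σ² = γ|ξ|²` and so covers both `σ = ∓√γ|ξ|`. Each eigen-relation is an algebraic identity, and
`Ã U = U D` is their column-by-column form.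
-/

open Matrix

/-- The matrix `U(ξ)` whose columns are the eigenvectors of the symbol `Ã(ξ, v)`. -/
noncomputable def Um (γ B z1 z2 ξ1 ξ2 : ℝ) : Matrix (Fin 5) (Fin 5) ℝ :=
  !![0, 0, 0, -(B / Real.sqrt γ), B / Real.sqrt γ;
     -(1 - B), 0, -(B * ξ2 / Real.sqrt (ξ1 ^ 2 + ξ2 ^ 2)),
       B * (γ * ξ1 - z1 * Real.sqrt γ * Real.sqrt (ξ1 ^ 2 + ξ2 ^ 2)) /
         (γ * Real.sqrt (ξ1 ^ 2 + ξ2 ^ 2)),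
       B * (γ * ξ1 + z1 * Real.sqrt γ * Real.sqrt (ξ1 ^ 2 + ξ2 ^ 2)) /
         (γ * Real.sqrt (ξ1 ^ 2 + ξ2 ^ 2));
     0, -(1 - B), B * ξ1 / Real.sqrt (ξ1 ^ 2 + ξ2 ^ 2),
       B * (γ * ξ2 - z2 * Real.sqrt γ * Real.sqrt (ξ1 ^ 2 + ξ2 ^ 2)) /
         (γ * Real.sqrt (ξ1 ^ 2 + ξ2 ^ 2)),
       B * (γ * ξ2 + z2 * Real.sqrt γ * Real.sqrt (ξ1 ^ 2 + ξ2 ^ 2)) /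
         (γ * Real.sqrt (ξ1 ^ 2 + ξ2 ^ 2));
     1, 0, -(ξ2 / Real.sqrt (ξ1 ^ 2 + ξ2 ^ 2)), ξ1 / Real.sqrt (ξ1 ^ 2 + ξ2 ^ 2),
       ξ1 / Real.sqrt (ξ1 ^ 2 + ξ2 ^ 2);
     0, 1, ξ1 / Real.sqrt (ξ1 ^ 2 + ξ2 ^ 2), ξ2 / Real.sqrt (ξ1 ^ 2 + ξ2 ^ 2),
       ξ2 / Real.sqrt (ξ1 ^ 2 + ξ2 ^ 2)]

theorem Matrix.mul_eq_mul_diagonal_iff {n R : Type*} [Fintype n] [DecidableEq n] [CommSemiring R]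
    {A U : Matrix n n R} {d : n → R} :
    A * U = U * diagonal d ↔ ∀ j, A *ᵥ Uᵀ j = d j • Uᵀ j := by
  rw [← Matrix.ext_iff, forall_comm]
  simp only [mul_diagonal, funext_iff, mulVec, dotProduct, transpose_apply, Pi.smul_apply,
    smul_eq_mul, mul_comm (d _)]
  rfl

noncomputable def acousticMode (γ B z1 z2 ξ1 ξ2 σ : ℝ) : Fin 5 → ℝ :=
  ![B * σ / γ, B * (ξ1 + z1 * σ / γ), B * (ξ2 + z2 * σ / γ), ξ1, ξ2]

section Eigenvectors

variable (γ B w1 w2 z1 z2 ξ1 ξ2 : ℝ)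

theorem At_mulVec_column_zero :
    At γ B w1 w2 z1 z2 ξ1 ξ2 *ᵥ ![0, -(1 - B), 0, 1, 0] =
      ((w1 - B * z1) * ξ1 + (w2 - B * z2) * ξ2) • ![0, -(1 - B), 0, 1, 0] := by
  ext i
  fin_cases i <;>
    simp only [At, At1, At2, mulVec, dotProduct, Fin.sum_univ_five, Matrix.add_apply,
      Matrix.smul_apply, smul_eq_mul, of_apply, cons_val', cons_val_zero, cons_val_one, cons_val,
      cons_val_fin_one, Pi.smul_apply, Fin.isValue, Fin.reduceFinMk, Fin.zero_eta, Fin.mk_one] <;>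
    ring

theorem At_mulVec_column_one :
    At γ B w1 w2 z1 z2 ξ1 ξ2 *ᵥ ![0, 0, -(1 - B), 0, 1] =
      ((w1 - B * z1) * ξ1 + (w2 - B * z2) * ξ2) • ![0, 0, -(1 - B), 0, 1] := by
  ext i
  fin_cases i <;>
    simp only [At, At1, At2, mulVec, dotProduct, Fin.sum_univ_five, Matrix.add_apply,
      Matrix.smul_apply, smul_eq_mul, of_apply, cons_val', cons_val_zero, cons_val_one, cons_val,
      cons_val_fin_one, Pi.smul_apply, Fin.isValue, Fin.reduceFinMk, Fin.zero_eta, Fin.mk_one] <;>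
    ring

theorem At_mulVec_shear :
    At γ B w1 w2 z1 z2 ξ1 ξ2 *ᵥ ![0, -(B * ξ2), B * ξ1, -ξ2, ξ1] =
      ((w1 + (1 - B) * z1) * ξ1 + (w2 + (1 - B) * z2) * ξ2) •
        ![0, -(B * ξ2), B * ξ1, -ξ2, ξ1] := by
  ext i
  fin_cases i <;>
    simp only [At, At1, At2, mulVec, dotProduct, Fin.sum_univ_five, Matrix.add_apply,
      Matrix.smul_apply, smul_eq_mul, of_apply, cons_val', cons_val_zero, cons_val_one, cons_val,
      cons_val_fin_one, Pi.smul_apply, Fin.isValue, Fin.reduceFinMk, Fin.zero_eta, Fin.mk_one] <;>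
    ring

theorem At_mulVec_acousticMode {σ : ℝ} (hγ : γ ≠ 0) (hB : B ≠ 0)
    (hσ : σ ^ 2 = γ * (ξ1 ^ 2 + ξ2 ^ 2)) :
    At γ B w1 w2 z1 z2 ξ1 ξ2 *ᵥ acousticMode γ B z1 z2 ξ1 ξ2 σ =
      ((w1 + (1 - B) * z1) * ξ1 + (w2 + (1 - B) * z2) * ξ2 + σ) •
        acousticMode γ B z1 z2 ξ1 ξ2 σ := by
  unfold acousticMode
  ext i
  fin_cases i <;>
    simp only [At, At1, At2, mulVec, dotProduct, Fin.sum_univ_five, Matrix.add_apply,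
      Matrix.smul_apply, smul_eq_mul, of_apply, cons_val', cons_val_zero, cons_val_one, cons_val,
      cons_val_fin_one, Pi.smul_apply, Fin.isValue, Fin.reduceFinMk, Fin.zero_eta, Fin.mk_one] <;>
    field_simp
  · linear_combination (-B) * hσ
  · linear_combination (-B * z1) * hσ
  · linear_combination (-B * z2) * hσ
  · ring
  · ring

end Eigenvectors

theorem Um_transpose (γ B z1 z2 ξ1 ξ2 : ℝ) (hγ : 0 < γ) (hξ : 0 < ξ1 ^ 2 + ξ2 ^ 2) :
    (Um γ B z1 z2 ξ1 ξ2)ᵀ =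
      ![![0, -(1 - B), 0, 1, 0], ![0, 0, -(1 - B), 0, 1],
        (Real.sqrt (ξ1 ^ 2 + ξ2 ^ 2))⁻¹ • ![0, -(B * ξ2), B * ξ1, -ξ2, ξ1],
        (Real.sqrt (ξ1 ^ 2 + ξ2 ^ 2))⁻¹ •
          acousticMode γ B z1 z2 ξ1 ξ2 (-(Real.sqrt γ * Real.sqrt (ξ1 ^ 2 + ξ2 ^ 2))),
        (Real.sqrt (ξ1 ^ 2 + ξ2 ^ 2))⁻¹ •
          acousticMode γ B z1 z2 ξ1 ξ2 (Real.sqrt γ * Real.sqrt (ξ1 ^ 2 + ξ2 ^ 2))] := by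
  have hS : Real.sqrt (ξ1 ^ 2 + ξ2 ^ 2) ≠ 0 := (Real.sqrt_pos.2 hξ).ne'
  have hG : Real.sqrt γ ≠ 0 := (Real.sqrt_pos.2 hγ).ne'
  have hG2 : Real.sqrt γ ^ 2 = γ := Real.sq_sqrt hγ.le
  ext i j
  fin_cases i <;> fin_cases j <;>
    simp only [Um, acousticMode, transpose_apply, of_apply, cons_val', cons_val_zero,
      cons_val_one, cons_val, cons_val_fin_one, Pi.smul_apply, smul_eq_mul, Fin.isValue,
      Fin.reduceFinMk, Fin.zero_eta, Fin.mk_one] <;>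
    field_simp <;> simp [hG2, sub_eq_add_neg]

/-- The columns of `U(ξ)` are eigenvectors of `Ã(ξ, v)`:
`Ã(ξ, v)·U(ξ) = U(ξ)·D(ξ)` where `D(ξ)` is the diagonal matrix of the real eigenvalues
`(w−Bz)·ξ, (w−Bz)·ξ, (w+(1−B)z)·ξ, (w+(1−B)z)·ξ ∓ √γ|ξ|`. -/
theorem stmt3 (γ B w1 w2 z1 z2 ξ1 ξ2 : ℝ) (hγ : 0 < γ) (hB : B ≠ 0)
    (hξ : (ξ1, ξ2) ≠ (0, 0)) :
    At γ B w1 w2 z1 z2 ξ1 ξ2 * Um γ B z1 z2 ξ1 ξ2 =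
      Um γ B z1 z2 ξ1 ξ2 *
        Matrix.diagonal
          ![(w1 - B * z1) * ξ1 + (w2 - B * z2) * ξ2,
            (w1 - B * z1) * ξ1 + (w2 - B * z2) * ξ2,
            (w1 + (1 - B) * z1) * ξ1 + (w2 + (1 - B) * z2) * ξ2,
            (w1 + (1 - B) * z1) * ξ1 + (w2 + (1 - B) * z2) * ξ2
              - Real.sqrt γ * Real.sqrt (ξ1 ^ 2 + ξ2 ^ 2),
            (w1 + (1 - B) * z1) * ξ1 + (w2 + (1 - B) * z2) * ξ2
              + Real.sqrt γ * Real.sqrt (ξ1 ^ 2 + ξ2 ^ 2)] := by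
  have hξ' : 0 < ξ1 ^ 2 + ξ2 ^ 2 := by
    contrapose! hξ
    rw [Prod.mk.injEq]
    constructor <;> nlinarith [sq_nonneg ξ1, sq_nonneg ξ2]
  have hσ : (Real.sqrt γ * Real.sqrt (ξ1 ^ 2 + ξ2 ^ 2)) ^ 2 = γ * (ξ1 ^ 2 + ξ2 ^ 2) := by
    rw [mul_pow, Real.sq_sqrt hγ.le, Real.sq_sqrt hξ'.le]
  rw [mul_eq_mul_diagonal_iff, Um_transpose γ B z1 z2 ξ1 ξ2 hγ hξ']
  intro j
  fin_cases j <;>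
    simp only [Fin.reduceFinMk, Fin.zero_eta, Fin.mk_one, Fin.isValue, cons_val, cons_val_zero,
      cons_val_one, mulVec_smul]
  · exact At_mulVec_column_zero ..
  · exact At_mulVec_column_one ..
  · rw [At_mulVec_shear, smul_comm]
  · rw [At_mulVec_acousticMode (hγ := hγ.ne') (hB := hB) (hσ := by rwa [neg_sq]), smul_comm,
      ← sub_eq_add_neg]
  · rw [At_mulVec_acousticMode (hγ := hγ.ne') (hB := hB) (hσ := hσ), smul_comm]
end

section
/- Let γ > 0 and v = (B, w, z) with 0 < B < 1 and w, z ∈ ℝ². Then the 5×5 matrix A₀(v) with rows (γ/B + |z|², −z₁, −z₂, 0, 0), (−z₁, 1, 0, 0, 0), (−z₂, 0, 1, 0, 0), (0, 0, 0, B(1−B), 0), (0, 0, 0, 0, B(1−B)) is symmetric positive definite, and both products A₀(v)·Ã₁(v) and A₀(v)·Ã₂(v) are symmetric. That is, A₀(v) is a classical (Friedrichs) symmetrizer for the first-order part of the two-phase system in the variables (B, w, z). -/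
open Matrix

/-!
With `y₁ = x₁ - z₁x₀` and `y₂ = x₂ - z₂x₀`, the quadratic form of `A₀` is
`γ/B · x₀² + y₁² + y₂² + B(1-B)(x₃² + x₄²)`, positive definite for `γ > 0` and `0 < B < 1`.
The product `A₀Ã₁` is computed explicitly and is visibly symmetric. Exchanging the two spatial
directions turns `Ã₁` into `Ã₂` and leaves `A₀` invariant up to `z₁ ↔ z₂`, so `A₀Ã₂` is a
simultaneous permutation of rows and columns of a matrix of the form `A₀Ã₁`.
-/

section Symmetrizer

variable (γ B w1 w2 z1 z2 : ℝ)

noncomputable def symmetrizer : Matrix (Fin 5) (Fin 5) ℝ :=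
  !![γ / B + (z1 ^ 2 + z2 ^ 2), -z1, -z2, 0, 0;
     -z1, 1, 0, 0, 0;
     -z2, 0, 1, 0, 0;
     0, 0, 0, B * (1 - B), 0;
     0, 0, 0, 0, B * (1 - B)]

/-- On the coordinates `(B, w₁, w₂, z₁, z₂)`, exchanges `w₁ ↔ w₂` and `z₁ ↔ z₂`. -/
def swapXY : Equiv.Perm (Fin 5) := Equiv.swap 1 2 * Equiv.swap 3 4

theorem symmetrizer_submatrix_swapXY :
    (symmetrizer γ B z1 z2).submatrix swapXY swapXY = symmetrizer γ B z2 z1 := by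
  ext i j
  fin_cases i <;> fin_cases j <;> simp [symmetrizer, swapXY, Equiv.swap_apply_def, add_comm]

theorem At2_eq_submatrix_swapXY :
    At2 γ B w1 w2 z1 z2 = (At1 γ B w2 w1 z2 z1).submatrix swapXY swapXY := by
  ext i j
  fin_cases i <;> fin_cases j <;> simp [At1, At2, swapXY, Equiv.swap_apply_def, mul_comm]

theorem symmetrizer_mul_At1 (hB : B ≠ 0) :
    symmetrizer γ B z1 z2 * At1 γ B w1 w2 z1 z2 =
      !![(γ / B + (z1 ^ 2 + z2 ^ 2)) * w1 + γ * z1 * (1 - 3 * B) / B, γ - z1 * w1, -(z2 * w1),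
          B * (1 - B) * (γ / B - z1 ^ 2), -(B * (1 - B) * z1 * z2);
         γ - z1 * w1, w1, 0, B * (1 - B) * z1, 0;
         -(z2 * w1), 0, w1, 0, B * (1 - B) * z1;
         B * (1 - B) * (γ / B - z1 ^ 2), B * (1 - B) * z1, 0,
          B * (1 - B) * (w1 + z1 * (1 - 2 * B)), 0;
         -(B * (1 - B) * z1 * z2), 0, B * (1 - B) * z1, 0,
          B * (1 - B) * (w1 + z1 * (1 - 2 * B))] := by
  ext i j
  fin_cases i <;> fin_cases j <;>
    simp only [symmetrizer, At1, mul_apply, Fin.sum_univ_five, of_apply, cons_val', cons_val_fin_one,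
      cons_val_zero, cons_val_one, cons_val, Fin.isValue, Fin.zero_eta, Fin.mk_one, Fin.reduceFinMk] <;>
    field_simp <;> ring

theorem isSymm_symmetrizer_mul_At1 (hB : B ≠ 0) :
    (symmetrizer γ B z1 z2 * At1 γ B w1 w2 z1 z2).IsSymm := by
  rw [symmetrizer_mul_At1 γ B w1 w2 z1 z2 hB]
  refine IsSymm.ext fun i j => ?_
  fin_cases i <;> fin_cases j <;> rfl

theorem isSymm_symmetrizer_mul_At2 (hB : B ≠ 0) :
    (symmetrizer γ B z1 z2 * At2 γ B w1 w2 z1 z2).IsSymm := by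
  rw [At2_eq_submatrix_swapXY, ← symmetrizer_submatrix_swapXY γ B z2 z1, submatrix_mul_equiv]
  exact (isSymm_symmetrizer_mul_At1 γ B w2 w1 z2 z1 hB).submatrix _

theorem dotProduct_symmetrizer_mulVec (x : Fin 5 → ℝ) :
    x ⬝ᵥ symmetrizer γ B z1 z2 *ᵥ x =
      γ / B * x 0 ^ 2 + (x 1 - z1 * x 0) ^ 2 + (x 2 - z2 * x 0) ^ 2 +
        B * (1 - B) * (x 3 ^ 2 + x 4 ^ 2) := by
  simp only [symmetrizer, dotProduct, mulVec, Fin.sum_univ_five, of_apply, cons_val', cons_val_fin_one,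
    cons_val_zero, cons_val_one, cons_val, Fin.isValue]
  ring

theorem posDef_symmetrizer (hγ : 0 < γ) (hB0 : 0 < B) (hB1 : B < 1) :
    (symmetrizer γ B z1 z2).PosDef := by
  refine posDef_iff_dotProduct_mulVec.mpr ⟨IsSymm.ext fun i j => ?_, fun x hx => ?_⟩
  · fin_cases i <;> fin_cases j <;> rfl
  rw [star_trivial, dotProduct_symmetrizer_mulVec]
  by_contra! hle
  have hγB : 0 < γ / B := div_pos hγ hB0
  have hβ : 0 < B * (1 - B) := mul_pos hB0 (sub_pos.mpr hB1)
  have t0 : 0 ≤ γ / B * x 0 ^ 2 := by positivity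
  have t1 := sq_nonneg (x 1 - z1 * x 0)
  have t2 := sq_nonneg (x 2 - z2 * x 0)
  have t3 : 0 ≤ B * (1 - B) * x 3 ^ 2 := by positivity
  have t4 : 0 ≤ B * (1 - B) * x 4 ^ 2 := by positivity
  have x0 : x 0 = 0 := by simpa [hγB.ne'] using (show γ / B * x 0 ^ 2 = 0 by linarith)
  have x1 : x 1 = 0 := by simpa [x0] using (show (x 1 - z1 * x 0) ^ 2 = 0 by linarith)
  have x2 : x 2 = 0 := by simpa [x0] using (show (x 2 - z2 * x 0) ^ 2 = 0 by linarith)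
  have x3 : x 3 = 0 := by simpa [hβ.ne'] using (show B * (1 - B) * x 3 ^ 2 = 0 by linarith)
  have x4 : x 4 = 0 := by simpa [hβ.ne'] using (show B * (1 - B) * x 4 ^ 2 = 0 by linarith)
  exact hx (funext fun i => by fin_cases i <;> assumption)

end Symmetrizer

/-- The matrix `A₀(v)` is a classical (Friedrichs) symmetrizer for the first-order part
of the two-phase system in the variables `(B, w, z)`: it is symmetric positive definite
and both `A₀(v)·Ã₁(v)` and `A₀(v)·Ã₂(v)` are symmetric. -/
theorem stmt5 (γ B w1 w2 z1 z2 : ℝ) (hγ : 0 < γ) (hB0 : 0 < B) (hB1 : B < 1) :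
    (!![γ / B + (z1 ^ 2 + z2 ^ 2), -z1, -z2, 0, 0;
        -z1, 1, 0, 0, 0;
        -z2, 0, 1, 0, 0;
        0, 0, 0, B * (1 - B), 0;
        0, 0, 0, 0, B * (1 - B)] : Matrix (Fin 5) (Fin 5) ℝ).PosDef ∧
    (!![γ / B + (z1 ^ 2 + z2 ^ 2), -z1, -z2, 0, 0;
        -z1, 1, 0, 0, 0;
        -z2, 0, 1, 0, 0;
        0, 0, 0, B * (1 - B), 0;
        0, 0, 0, 0, B * (1 - B)] * At1 γ B w1 w2 z1 z2).IsSymm ∧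
    (!![γ / B + (z1 ^ 2 + z2 ^ 2), -z1, -z2, 0, 0;
        -z1, 1, 0, 0, 0;
        -z2, 0, 1, 0, 0;
        0, 0, 0, B * (1 - B), 0;
        0, 0, 0, 0, B * (1 - B)] * At2 γ B w1 w2 z1 z2).IsSymm :=
  ⟨posDef_symmetrizer γ B z1 z2 hγ hB0 hB1,
    isSymm_symmetrizer_mul_At1 γ B w1 w2 z1 z2 hB0.ne',
    isSymm_symmetrizer_mul_At2 γ B w1 w2 z1 z2 hB0.ne'⟩
end

section
/- Let T > 0, γ, M ∈ ℝ, and let B : (0,T)×ℝ² → ℝ, v_S, v_L : (0,T)×ℝ² → ℝ², P : (0,T)×ℝ² → ℝ and Γ_B : (0,T)×ℝ² → ℝ be C² functions with 0 < B < 1 everywhere, satisfying on (0,T)×ℝ²: ∂ₜB + ∇·(B v_S) = Γ_B; ∂ₜv_S + (v_S·∇)v_S + γ∇B/B + ∇P = (M+Γ_B)(v_L−v_S)/B; ∂ₜv_L + (v_L·∇)v_L + ∇P = M(v_S−v_L)/(1−B); and ∇·(B v_S + (1−B) v_L) = 0. Then the average velocity w := B v_S + (1−B) v_L and the relative velocity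 z := v_S − v_L satisfy ∇·w = 0 and ∂ₜw + (w·∇)w + ∇·(B(1−B) z ⊗ z) + γ∇B + ∇P = 0, where ∇·(B(1−B) z⊗z) denotes the vector with i-th component Σ_{j=1}^{2} ∂_{x_j}(B(1−B) z_i z_j). -/
/-!
Multiply the solid momentum equation by `B` and the liquid one by `1 - B` and add them: the
interphase forces `(M + Γ_B)(v_L - v_S)` and `M(v_S - v_L)` leave `Γ_B (v_L - v_S)`, which is
cancelled by `z` times the mass balance. The convective terms recombine via
`B v_S ⊗ v_S + (1 - B) v_L ⊗ v_L = w ⊗ w + B(1 - B) z ⊗ z` and `∇·w = 0`.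
-/

/-- Partial derivative in the time variable `t` of a function on `(t, x₁, x₂)`-space. -/
noncomputable def pdt (f : ℝ × ℝ × ℝ → ℝ) (p : ℝ × ℝ × ℝ) : ℝ :=
  fderiv ℝ f p (1, 0, 0)

/-- Partial derivative in the first spatial variable `x₁`. -/
noncomputable def pdx (f : ℝ × ℝ × ℝ → ℝ) (p : ℝ × ℝ × ℝ) : ℝ :=
  fderiv ℝ f p (0, 1, 0)

/-- Partial derivative in the second spatial variable `x₂`. -/
noncomputable def pdy (f : ℝ × ℝ × ℝ → ℝ) (p : ℝ × ℝ × ℝ) : ℝ :=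
  fderiv ℝ f p (0, 0, 1)

/-- The space-time domain `(0,T) × ℝ²`, viewed as a subset of `ℝ × ℝ × ℝ`. -/
def dom (T : ℝ) : Set (ℝ × ℝ × ℝ) := {p | 0 < p.1 ∧ p.1 < T}

/-- `uS`, `uL` stand for the `i`-th components of `v_S`, `v_L`, and `e` for the `i`-th
coordinate direction. -/
theorem mixture_momentum_component {E : Type*} [NormedAddCommGroup E] [NormedSpace ℝ E]
    {B vS1 vS2 vL1 vL2 uS uL P : E → ℝ} {p et ex ey e : E} {γ M Γ : ℝ}
    (hB : DifferentiableAt ℝ B p) (hvS1 : DifferentiableAt ℝ vS1 p)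
    (hvS2 : DifferentiableAt ℝ vS2 p) (hvL1 : DifferentiableAt ℝ vL1 p)
    (hvL2 : DifferentiableAt ℝ vL2 p) (huS : DifferentiableAt ℝ uS p)
    (huL : DifferentiableAt ℝ uL p) (hB0 : B p ≠ 0) (hB1 : 1 - B p ≠ 0)
    (hmass : fderiv ℝ B p et + fderiv ℝ (fun q => B q * vS1 q) p ex
      + fderiv ℝ (fun q => B q * vS2 q) p ey = Γ)
    (hdiv : fderiv ℝ (fun q => B q * vS1 q + (1 - B q) * vL1 q) p ex
      + fderiv ℝ (fun q => B q * vS2 q + (1 - B q) * vL2 q) p ey = 0)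
    (hmomS : fderiv ℝ uS p et + (vS1 p * fderiv ℝ uS p ex + vS2 p * fderiv ℝ uS p ey)
      + γ * fderiv ℝ B p e / B p + fderiv ℝ P p e = (M + Γ) * (uL p - uS p) / B p)
    (hmomL : fderiv ℝ uL p et + (vL1 p * fderiv ℝ uL p ex + vL2 p * fderiv ℝ uL p ey)
      + fderiv ℝ P p e = M * (uS p - uL p) / (1 - B p)) :
    let w := fun q => B q * uS q + (1 - B q) * uL q
    let w1 := fun q => B q * vS1 q + (1 - B q) * vL1 q
    let w2 := fun q => B q * vS2 q + (1 - B q) * vL2 q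
    let z := fun q => uS q - uL q
    fderiv ℝ w p et + (w1 p * fderiv ℝ w p ex + w2 p * fderiv ℝ w p ey)
      + (fderiv ℝ (fun q => B q * (1 - B q) * z q * (vS1 q - vL1 q)) p ex
        + fderiv ℝ (fun q => B q * (1 - B q) * z q * (vS2 q - vL2 q)) p ey)
      + γ * fderiv ℝ B p e + fderiv ℝ P p e = 0 := by
  intro w w1 w2 z
  field_simp at hmomS hmomL
  simp (disch := fun_prop) only [w, w1, w2, z, fderiv_fun_mul, fderiv_fun_add, fderiv_const_sub,
    fderiv_fun_sub, add_apply, sub_apply, neg_apply, smul_apply, smul_eq_mul] at hmass hdiv ⊢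
  linear_combination hmomS + hmomL + (uS p - uL p) * hmass - B p * (uS p - uL p) * hdiv

theorem isOpen_dom (T : ℝ) : IsOpen (dom T) :=
  isOpen_Ioo.preimage continuous_fst

theorem stmt7_general (T γ M : ℝ)
    (B vS1 vS2 vL1 vL2 P ΓB : ℝ × ℝ × ℝ → ℝ)
    (hBreg : ContDiffOn ℝ 2 B (dom T)) (hvS1 : ContDiffOn ℝ 2 vS1 (dom T))
    (hvS2 : ContDiffOn ℝ 2 vS2 (dom T)) (hvL1 : ContDiffOn ℝ 2 vL1 (dom T))
    (hvL2 : ContDiffOn ℝ 2 vL2 (dom T))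
    (hB0 : ∀ p ∈ dom T, 0 < B p) (hB1 : ∀ p ∈ dom T, B p < 1)
    (hmass : ∀ p ∈ dom T,
      pdt B p + pdx (fun q => B q * vS1 q) p + pdy (fun q => B q * vS2 q) p = ΓB p)
    (hmomS1 : ∀ p ∈ dom T,
      pdt vS1 p + (vS1 p * pdx vS1 p + vS2 p * pdy vS1 p) + γ * pdx B p / B p + pdx P p =
        (M + ΓB p) * (vL1 p - vS1 p) / B p)
    (hmomS2 : ∀ p ∈ dom T,
      pdt vS2 p + (vS1 p * pdx vS2 p + vS2 p * pdy vS2 p) + γ * pdy B p / B p + pdy P p =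
        (M + ΓB p) * (vL2 p - vS2 p) / B p)
    (hmomL1 : ∀ p ∈ dom T,
      pdt vL1 p + (vL1 p * pdx vL1 p + vL2 p * pdy vL1 p) + pdx P p =
        M * (vS1 p - vL1 p) / (1 - B p))
    (hmomL2 : ∀ p ∈ dom T,
      pdt vL2 p + (vL1 p * pdx vL2 p + vL2 p * pdy vL2 p) + pdy P p =
        M * (vS2 p - vL2 p) / (1 - B p))
    (hdiv : ∀ p ∈ dom T,
      pdx (fun q => B q * vS1 q + (1 - B q) * vL1 q) p +
        pdy (fun q => B q * vS2 q + (1 - B q) * vL2 q) p = 0)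
    (w1 w2 z1 z2 : ℝ × ℝ × ℝ → ℝ)
    (hw1 : w1 = fun q => B q * vS1 q + (1 - B q) * vL1 q)
    (hw2 : w2 = fun q => B q * vS2 q + (1 - B q) * vL2 q)
    (hz1 : z1 = fun q => vS1 q - vL1 q) (hz2 : z2 = fun q => vS2 q - vL2 q) :
    ∀ p ∈ dom T,
      (pdx w1 p + pdy w2 p = 0) ∧
      (pdt w1 p + (w1 p * pdx w1 p + w2 p * pdy w1 p) +
        (pdx (fun q => B q * (1 - B q) * z1 q * z1 q) p +
          pdy (fun q => B q * (1 - B q) * z1 q * z2 q) p) +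
        γ * pdx B p + pdx P p = 0) ∧
      (pdt w2 p + (w1 p * pdx w2 p + w2 p * pdy w2 p) +
        (pdx (fun q => B q * (1 - B q) * z2 q * z1 q) p +
          pdy (fun q => B q * (1 - B q) * z2 q * z2 q) p) +
        γ * pdy B p + pdy P p = 0) := by
  intro p hp
  subst hw1 hw2 hz1 hz2
  have hdiff {f : ℝ × ℝ × ℝ → ℝ} (hf : ContDiffOn ℝ 2 f (dom T)) : DifferentiableAt ℝ f p :=
    (hf.differentiableOn two_ne_zero).differentiableAt ((isOpen_dom T).mem_nhds hp)
  have hBp : B p ≠ 0 := (hB0 p hp).ne'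
  have hBp' : 1 - B p ≠ 0 := sub_ne_zero.mpr (hB1 p hp).ne'
  exact ⟨hdiv p hp,
    mixture_momentum_component (hdiff hBreg) (hdiff hvS1) (hdiff hvS2) (hdiff hvL1) (hdiff hvL2)
      (hdiff hvS1) (hdiff hvL1) hBp hBp' (hmass p hp) (hdiv p hp) (hmomS1 p hp) (hmomL1 p hp),
    mixture_momentum_component (hdiff hBreg) (hdiff hvS1) (hdiff hvS2) (hdiff hvL1) (hdiff hvL2)
      (hdiff hvS2) (hdiff hvL2) hBp hBp' (hmass p hp) (hdiv p hp) (hmomS2 p hp) (hmomL2 p hp)⟩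

/-- If `(B, v_S, v_L, P)` is a `C²` solution of the two-phase system on `(0,T) × ℝ²`
with `0 < B < 1`, then the average velocity `w := B v_S + (1−B) v_L` and the relative
velocity `z := v_S − v_L` satisfy `∇·w = 0` and
`∂ₜw + (w·∇)w + ∇·(B(1−B) z ⊗ z) + γ∇B + ∇P = 0`. -/
theorem stmt7 (T γ M : ℝ) (hT : 0 < T)
    (B vS1 vS2 vL1 vL2 P ΓB : ℝ × ℝ × ℝ → ℝ)
    (hBreg : ContDiffOn ℝ 2 B (dom T)) (hvS1 : ContDiffOn ℝ 2 vS1 (dom T))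
    (hvS2 : ContDiffOn ℝ 2 vS2 (dom T)) (hvL1 : ContDiffOn ℝ 2 vL1 (dom T))
    (hvL2 : ContDiffOn ℝ 2 vL2 (dom T)) (hP : ContDiffOn ℝ 2 P (dom T))
    (hΓ : ContDiffOn ℝ 2 ΓB (dom T))
    (hB0 : ∀ p ∈ dom T, 0 < B p) (hB1 : ∀ p ∈ dom T, B p < 1)
    (hmass : ∀ p ∈ dom T,
      pdt B p + pdx (fun q => B q * vS1 q) p + pdy (fun q => B q * vS2 q) p = ΓB p)
    (hmomS1 : ∀ p ∈ dom T,
      pdt vS1 p + (vS1 p * pdx vS1 p + vS2 p * pdy vS1 p) + γ * pdx B p / B p + pdx P p =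
        (M + ΓB p) * (vL1 p - vS1 p) / B p)
    (hmomS2 : ∀ p ∈ dom T,
      pdt vS2 p + (vS1 p * pdx vS2 p + vS2 p * pdy vS2 p) + γ * pdy B p / B p + pdy P p =
        (M + ΓB p) * (vL2 p - vS2 p) / B p)
    (hmomL1 : ∀ p ∈ dom T,
      pdt vL1 p + (vL1 p * pdx vL1 p + vL2 p * pdy vL1 p) + pdx P p =
        M * (vS1 p - vL1 p) / (1 - B p))
    (hmomL2 : ∀ p ∈ dom T,
      pdt vL2 p + (vL1 p * pdx vL2 p + vL2 p * pdy vL2 p) + pdy P p =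
        M * (vS2 p - vL2 p) / (1 - B p))
    (hdiv : ∀ p ∈ dom T,
      pdx (fun q => B q * vS1 q + (1 - B q) * vL1 q) p +
        pdy (fun q => B q * vS2 q + (1 - B q) * vL2 q) p = 0)
    (w1 w2 z1 z2 : ℝ × ℝ × ℝ → ℝ)
    (hw1 : w1 = fun q => B q * vS1 q + (1 - B q) * vL1 q)
    (hw2 : w2 = fun q => B q * vS2 q + (1 - B q) * vL2 q)
    (hz1 : z1 = fun q => vS1 q - vL1 q) (hz2 : z2 = fun q => vS2 q - vL2 q) :
    ∀ p ∈ dom T,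
      (pdx w1 p + pdy w2 p = 0) ∧
      (pdt w1 p + (w1 p * pdx w1 p + w2 p * pdy w1 p) +
        (pdx (fun q => B q * (1 - B q) * z1 q * z1 q) p +
          pdy (fun q => B q * (1 - B q) * z1 q * z2 q) p) +
        γ * pdx B p + pdx P p = 0) ∧
      (pdt w2 p + (w1 p * pdx w2 p + w2 p * pdy w2 p) +
        (pdx (fun q => B q * (1 - B q) * z2 q * z1 q) p +
          pdy (fun q => B q * (1 - B q) * z2 q * z2 q) p) +
        γ * pdy B p + pdy P p = 0) :=
  stmt7_general T γ M B vS1 vS2 vL1 vL2 P ΓB hBreg hvS1 hvS2 hvL1 hvL2 hB0 hB1 hmass hmomS1 hmomS2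
    hmomL1 hmomL2 hdiv w1 w2 z1 z2 hw1 hw2 hz1 hz2
end

section
/- Let γ > 0, v = (B, w, z) with B ≠ 0, and ξ = (ξ₁, ξ₂) ∈ ℝ² ∖ {0}. Set μ₁ := (z·ξ)(ξ₂z₁−ξ₁z₂), μ₂ := (w·ξ)ξ₂ + Bξ₁(ξ₂z₁−ξ₁z₂), μ₃ := (w·ξ)ξ₁ − Bξ₂(ξ₂z₁−ξ₁z₂), μ₄ := z₂(ξ₂²−ξ₁²) + 2z₁ξ₁ξ₂, μ₅ := z₁(ξ₁²−ξ₂²) + 2z₂ξ₁ξ₂. Then the product 𝐏(ξ)·Ã(ξ, v) equals the 5×5 matrix with rows ((w+(1−2B)z)·ξ, Bξ₁, Bξ₂, B(1−B)ξ₁, B(1−B)ξ₂), (ξ₂(1−2B)μ₁/|ξ|², ξ₂μ₂/|ξ|², −ξ₂μ₃/|ξ|², B(1−B)ξ₂μ₄/|ξ|², −B(1−B)ξ₂μ₅/|ξ|²), (−ξ₁(1−2B)μ₁/|ξ|², −ξ₁μ₂/|ξ|², ξ₁μ₃/|ξ|², −B(1−B)ξ₁μ₄/|ξ|², B(1−B)ξ₁μ₅/|ξ|²),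 (γξ₁/B − z₁(z·ξ), z·ξ, 0, (w+(1−2B)z)·ξ, 0), (γξ₂/B − z₂(z·ξ), 0, z·ξ, 0, (w+(1−2B)z)·ξ). -/
set_option maxHeartbeats 1000000


open Matrix

/-- The symbol `𝐏(ξ) = diag(1, I₂ − ξξᵀ/|ξ|², I₂)` of the generalized Leray projector. -/
noncomputable def Pm (ξ1 ξ2 : ℝ) : Matrix (Fin 5) (Fin 5) ℝ :=
  !![1, 0, 0, 0, 0;
     0, 1 - ξ1 ^ 2 / (ξ1 ^ 2 + ξ2 ^ 2), -(ξ1 * ξ2) / (ξ1 ^ 2 + ξ2 ^ 2), 0, 0;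
     0, -(ξ1 * ξ2) / (ξ1 ^ 2 + ξ2 ^ 2), 1 - ξ2 ^ 2 / (ξ1 ^ 2 + ξ2 ^ 2), 0, 0;
     0, 0, 0, 1, 0;
     0, 0, 0, 0, 1]

/-- The explicit form of the product `𝐏(ξ)·Ã(ξ, v)`, in terms of the quantities
`μ₁ = (z·ξ)(ξ₂z₁−ξ₁z₂)`, `μ₂ = (w·ξ)ξ₂ + Bξ₁(ξ₂z₁−ξ₁z₂)`,
`μ₃ = (w·ξ)ξ₁ − Bξ₂(ξ₂z₁−ξ₁z₂)`, `μ₄ = z₂(ξ₂²−ξ₁²) + 2z₁ξ₁ξ₂`,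
`μ₅ = z₁(ξ₁²−ξ₂²) + 2z₂ξ₁ξ₂`. -/
theorem stmt10 (γ B w1 w2 z1 z2 ξ1 ξ2 : ℝ) (hγ : 0 < γ) (hB : B ≠ 0)
    (hξ : (ξ1, ξ2) ≠ (0, 0))
    (μ1 μ2 μ3 μ4 μ5 : ℝ)
    (hμ1 : μ1 = (z1 * ξ1 + z2 * ξ2) * (ξ2 * z1 - ξ1 * z2))
    (hμ2 : μ2 = (w1 * ξ1 + w2 * ξ2) * ξ2 + B * ξ1 * (ξ2 * z1 - ξ1 * z2))
    (hμ3 : μ3 = (w1 * ξ1 + w2 * ξ2) * ξ1 - B * ξ2 * (ξ2 * z1 - ξ1 * z2))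
    (hμ4 : μ4 = z2 * (ξ2 ^ 2 - ξ1 ^ 2) + 2 * z1 * ξ1 * ξ2)
    (hμ5 : μ5 = z1 * (ξ1 ^ 2 - ξ2 ^ 2) + 2 * z2 * ξ1 * ξ2) :
    Pm ξ1 ξ2 * At γ B w1 w2 z1 z2 ξ1 ξ2 =
      !![(w1 + (1 - 2 * B) * z1) * ξ1 + (w2 + (1 - 2 * B) * z2) * ξ2,
           B * ξ1, B * ξ2, B * (1 - B) * ξ1, B * (1 - B) * ξ2;
         ξ2 * (1 - 2 * B) * μ1 / (ξ1 ^ 2 + ξ2 ^ 2), ξ2 * μ2 / (ξ1 ^ 2 + ξ2 ^ 2),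
           -(ξ2 * μ3) / (ξ1 ^ 2 + ξ2 ^ 2), B * (1 - B) * ξ2 * μ4 / (ξ1 ^ 2 + ξ2 ^ 2),
           -(B * (1 - B) * ξ2 * μ5) / (ξ1 ^ 2 + ξ2 ^ 2);
         -(ξ1 * (1 - 2 * B) * μ1) / (ξ1 ^ 2 + ξ2 ^ 2), -(ξ1 * μ2) / (ξ1 ^ 2 + ξ2 ^ 2),
           ξ1 * μ3 / (ξ1 ^ 2 + ξ2 ^ 2), -(B * (1 - B) * ξ1 * μ4) / (ξ1 ^ 2 + ξ2 ^ 2),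
           B * (1 - B) * ξ1 * μ5 / (ξ1 ^ 2 + ξ2 ^ 2);
         γ * ξ1 / B - z1 * (z1 * ξ1 + z2 * ξ2), z1 * ξ1 + z2 * ξ2, 0,
           (w1 + (1 - 2 * B) * z1) * ξ1 + (w2 + (1 - 2 * B) * z2) * ξ2, 0;
         γ * ξ2 / B - z2 * (z1 * ξ1 + z2 * ξ2), 0, z1 * ξ1 + z2 * ξ2, 0,
           (w1 + (1 - 2 * B) * z1) * ξ1 + (w2 + (1 - 2 * B) * z2) * ξ2] := by
  have h12 : ξ1 ≠ 0 ∨ ξ2 ≠ 0 := by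
    by_contra h
    push_neg at h
    exact hξ (by simp [h.1, h.2])
  have hs : ξ1 ^ 2 + ξ2 ^ 2 ≠ 0 := by
    rcases h12 with h | h
    · positivity
    · positivity
  subst hμ1 hμ2 hμ3 hμ4 hμ5
  ext i j
  fin_cases i <;> fin_cases j <;>
    simp [Pm, At, At1, At2, Matrix.mul_apply, Fin.sum_univ_five] <;>
    (try field_simp) <;> ring_nf
end

section
/- (Strong hyperbolicity of the projected symbol.) Let γ > 0, v = (B, w, z) with 0 < B < 1, and ξ ∈ ℝ² ∖ {0}. Assume Δ₁(ξ) ≠ 0, Δ₂(ξ) > 0 and Δ₃(ξ) ≠ 0. Then the matrix 𝐏(ξ)Ã(ξ, v) is diagonalizable over ℝ: there exists an invertible real 5×5 matrix V such that V⁻¹·𝐏(ξ)Ã(ξ, v)·V = diag(0, (w−Bz)·ξ, (w+(1−B)z)·ξ, (w+(1−2B)z)·ξ − √((1−B)Δ₂(ξ)), (w+(1−2B)z)·ξ + √((1−B)Δ₂(ξ))). -/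
open Matrix

/-- `Δ₁(ξ) := (1−B)(z·ξ)² − γ|ξ|² + (w·ξ)(z·ξ)`. -/
noncomputable def D1 (γ B w1 w2 z1 z2 ξ1 ξ2 : ℝ) : ℝ :=
  (1 - B) * (z1 * ξ1 + z2 * ξ2) ^ 2 - γ * (ξ1 ^ 2 + ξ2 ^ 2) +
    (w1 * ξ1 + w2 * ξ2) * (z1 * ξ1 + z2 * ξ2)

/-- `Δ₂(ξ) := γ|ξ|² − B(z·ξ)²`. -/
noncomputable def D2 (γ B z1 z2 ξ1 ξ2 : ℝ) : ℝ :=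
  γ * (ξ1 ^ 2 + ξ2 ^ 2) - B * (z1 * ξ1 + z2 * ξ2) ^ 2

/-- `Δ₃(ξ) := (1 − 3B(1−B))(z·ξ)² + (w·ξ)² − γ(1−B)|ξ|² + 2(1−2B)(w·ξ)(z·ξ)`. -/
noncomputable def D3 (γ B w1 w2 z1 z2 ξ1 ξ2 : ℝ) : ℝ :=
  (1 - 3 * B * (1 - B)) * (z1 * ξ1 + z2 * ξ2) ^ 2 + (w1 * ξ1 + w2 * ξ2) ^ 2 -
    γ * (1 - B) * (ξ1 ^ 2 + ξ2 ^ 2) +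
    2 * (1 - 2 * B) * (w1 * ξ1 + w2 * ξ2) * (z1 * ξ1 + z2 * ξ2)

/-! Each eigenvalue comes with an explicit eigenvector `e`, and `Ã(ξ)` maps `e` to `λ e + c (0, ξ, 0)`.
The projector `𝐏(ξ)` kills the longitudinal velocity `(0, ξ, 0)` and fixes every vector whose
velocity part is orthogonal to `ξ`, which is the case for all eigenvectors except the one for
`λ = 0`. The eigenvector matrix has determinant `2B(1−B)|ξ|⁶ Δ₃(ξ) √((1−B)Δ₂(ξ))`; note that
`Δ₃(ξ)` is the product of the two acoustic eigenvalues `(w+(1−2B)z)·ξ ∓ √((1−B)Δ₂(ξ))`. -/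

theorem Matrix.inv_mul_mul_eq_diagonal_of_mulVec_eq {n R : Type*} [Fintype n] [DecidableEq n]
    [CommRing R] {M : Matrix n n R} {v : n → n → R} {d : n → R} (hv : IsUnit (of v).det)
    (h : ∀ j, M *ᵥ v j = d j • v j) : ((of v)ᵀ)⁻¹ * M * (of v)ᵀ = diagonal d := by
  have hV : IsUnit (of v)ᵀ.det := by rwa [det_transpose]
  have hMV : M * (of v)ᵀ = (of v)ᵀ * diagonal d := by
    ext i j
    rw [mul_diagonal]
    simpa [mul_apply, mulVec, dotProduct, mul_comm] using congrFun (h j) i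
  rw [Matrix.mul_assoc, hMV, ← Matrix.mul_assoc, nonsing_inv_mul _ hV, Matrix.one_mul]

def longitudinal (ξ1 ξ2 : ℝ) : Fin 5 → ℝ := ![0, ξ1, ξ2, 0, 0]

noncomputable def nullVec (γ B w1 w2 z1 z2 ξ1 ξ2 : ℝ) : Fin 5 → ℝ :=
  let W := w1 * ξ1 + w2 * ξ2
  let Z := z1 * ξ1 + z2 * ξ2
  let X := z2 * ξ1 - z1 * ξ2
  let a := W + (1 - 2 * B) * Z
  let D := D2 γ B z1 z2 ξ1 ξ2
  ![B * (ξ1 ^ 2 + ξ2 ^ 2) * (W - B * Z),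
    ((1 - B) * D - a ^ 2) * ξ1 - B * (W - B * Z) * X * ξ2,
    ((1 - B) * D - a ^ 2) * ξ2 + B * (W - B * Z) * X * ξ1,
    (Z * a - D) * ξ1,
    (Z * a - D) * ξ2]

def shearVec (ξ1 ξ2 μ : ℝ) : Fin 5 → ℝ := ![0, -(μ * ξ2), μ * ξ1, -ξ2, ξ1]

def acousticVec (B z1 z2 ξ1 ξ2 t : ℝ) : Fin 5 → ℝ :=
  let X := z2 * ξ1 - z1 * ξ2
  ![B * (1 - B) * (ξ1 ^ 2 + ξ2 ^ 2), -(B * (1 - B) * X * ξ2), B * (1 - B) * X * ξ1,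
    t * ξ1, t * ξ2]

noncomputable def eigenvectors (γ B w1 w2 z1 z2 ξ1 ξ2 s : ℝ) : Fin 5 → Fin 5 → ℝ :=
  ![nullVec γ B w1 w2 z1 z2 ξ1 ξ2, shearVec ξ1 ξ2 (-(1 - B)), shearVec ξ1 ξ2 B,
    acousticVec B z1 z2 ξ1 ξ2 (-s), acousticVec B z1 z2 ξ1 ξ2 s]

section Eigenvectors

variable {γ B w1 w2 z1 z2 ξ1 ξ2 : ℝ}

theorem Pm_mulVec_longitudinal (hN : ξ1 ^ 2 + ξ2 ^ 2 ≠ 0) :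
    Pm ξ1 ξ2 *ᵥ longitudinal ξ1 ξ2 = 0 := by
  ext i
  fin_cases i <;> simp [Pm, longitudinal, mulVec, dotProduct, Fin.sum_univ_five] <;>
    field_simp <;> ring

theorem Pm_mulVec_of_transverse (hN : ξ1 ^ 2 + ξ2 ^ 2 ≠ 0) {e : Fin 5 → ℝ}
    (he : e 1 * ξ1 + e 2 * ξ2 = 0) : Pm ξ1 ξ2 *ᵥ e = e := by
  ext i
  fin_cases i <;> simp [Pm, mulVec, dotProduct, Fin.sum_univ_five] <;> field_simp
  · linear_combination -ξ1 * he
  · linear_combination -ξ2 * he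

theorem Pm_mul_mulVec_of_mulVec_eq (hN : ξ1 ^ 2 + ξ2 ^ 2 ≠ 0) {M : Matrix (Fin 5) (Fin 5) ℝ}
    {e : Fin 5 → ℝ} {l c : ℝ} (hMe : M *ᵥ e = l • e + c • longitudinal ξ1 ξ2) :
    (Pm ξ1 ξ2 * M) *ᵥ e = l • (Pm ξ1 ξ2 *ᵥ e) := by
  rw [← mulVec_mulVec, hMe, mulVec_add, mulVec_smul, mulVec_smul, Pm_mulVec_longitudinal hN,
    smul_zero, add_zero]

theorem At_mulVec_nullVec (hB : B ≠ 0) : ∃ c : ℝ,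
    At γ B w1 w2 z1 z2 ξ1 ξ2 *ᵥ nullVec γ B w1 w2 z1 z2 ξ1 ξ2 = c • longitudinal ξ1 ξ2 := by
  let W := w1 * ξ1 + w2 * ξ2
  let Z := z1 * ξ1 + z2 * ξ2
  let a := W + (1 - 2 * B) * Z
  let D := D2 γ B z1 z2 ξ1 ξ2
  refine ⟨γ * B * (ξ1 ^ 2 + ξ2 ^ 2) * (W - B * Z) - B * W * Z * (W - B * Z)
    + W * ((1 - B) * D - a ^ 2) + B * (1 - B) * Z * (Z * a - D), ?_⟩
  ext i
  fin_cases i <;>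
    simp [At, At1, At2, nullVec, longitudinal, D2, W, Z, a, D, mulVec, dotProduct,
      Fin.sum_univ_five] <;> field_simp <;> ring

theorem At_mulVec_shearVec {μ : ℝ} (hμ : (μ - B) * (μ + 1 - B) = 0) :
    At γ B w1 w2 z1 z2 ξ1 ξ2 *ᵥ shearVec ξ1 ξ2 μ =
      ((w1 + (1 - 2 * B + μ) * z1) * ξ1 + (w2 + (1 - 2 * B + μ) * z2) * ξ2) •
        shearVec ξ1 ξ2 μ := by
  ext i
  fin_cases i <;> simp [At, At1, At2, shearVec, mulVec, dotProduct, Fin.sum_univ_five]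
  · ring
  · linear_combination ξ2 * (z1 * ξ1 + z2 * ξ2) * hμ
  · linear_combination -ξ1 * (z1 * ξ1 + z2 * ξ2) * hμ
  · ring
  · ring

theorem At_mulVec_acousticVec (hB : B ≠ 0) {t : ℝ} (ht : t ^ 2 = (1 - B) * D2 γ B z1 z2 ξ1 ξ2) :
    At γ B w1 w2 z1 z2 ξ1 ξ2 *ᵥ acousticVec B z1 z2 ξ1 ξ2 t =
      ((w1 + (1 - 2 * B) * z1) * ξ1 + (w2 + (1 - 2 * B) * z2) * ξ2 + t) •
          acousticVec B z1 z2 ξ1 ξ2 t +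
        (B * (1 - B) * (γ * (ξ1 ^ 2 + ξ2 ^ 2) + (1 - 2 * B) * (z1 * ξ1 + z2 * ξ2) ^ 2
          + 2 * t * (z1 * ξ1 + z2 * ξ2))) • longitudinal ξ1 ξ2 := by
  simp only [D2] at ht
  ext i
  fin_cases i <;>
    simp [At, At1, At2, acousticVec, longitudinal, mulVec, dotProduct, Fin.sum_univ_five] <;>
    field_simp
  · ring
  · ring
  · ring
  · linear_combination -ξ1 * ht
  · linear_combination -ξ2 * ht

theorem Pm_mul_At_mulVec_nullVec (hB : B ≠ 0) (hN : ξ1 ^ 2 + ξ2 ^ 2 ≠ 0) :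
    (Pm ξ1 ξ2 * At γ B w1 w2 z1 z2 ξ1 ξ2) *ᵥ nullVec γ B w1 w2 z1 z2 ξ1 ξ2 = 0 := by
  obtain ⟨c, hc⟩ := At_mulVec_nullVec (γ := γ) (w1 := w1) (w2 := w2) (z1 := z1) (z2 := z2)
    (ξ1 := ξ1) (ξ2 := ξ2) hB
  rw [Pm_mul_mulVec_of_mulVec_eq hN (l := 0) (by simpa using hc), zero_smul]

theorem Pm_mul_At_mulVec_shearVec (hN : ξ1 ^ 2 + ξ2 ^ 2 ≠ 0) {μ : ℝ}
    (hμ : (μ - B) * (μ + 1 - B) = 0) :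
    (Pm ξ1 ξ2 * At γ B w1 w2 z1 z2 ξ1 ξ2) *ᵥ shearVec ξ1 ξ2 μ =
      ((w1 + (1 - 2 * B + μ) * z1) * ξ1 + (w2 + (1 - 2 * B + μ) * z2) * ξ2) •
        shearVec ξ1 ξ2 μ := by
  rw [Pm_mul_mulVec_of_mulVec_eq hN (c := 0) (by simpa using At_mulVec_shearVec hμ),
    Pm_mulVec_of_transverse hN (by simp [shearVec]; ring)]

theorem Pm_mul_At_mulVec_acousticVec (hB : B ≠ 0) (hN : ξ1 ^ 2 + ξ2 ^ 2 ≠ 0) {t : ℝ}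
    (ht : t ^ 2 = (1 - B) * D2 γ B z1 z2 ξ1 ξ2) :
    (Pm ξ1 ξ2 * At γ B w1 w2 z1 z2 ξ1 ξ2) *ᵥ acousticVec B z1 z2 ξ1 ξ2 t =
      ((w1 + (1 - 2 * B) * z1) * ξ1 + (w2 + (1 - 2 * B) * z2) * ξ2 + t) •
        acousticVec B z1 z2 ξ1 ξ2 t := by
  rw [Pm_mul_mulVec_of_mulVec_eq hN (At_mulVec_acousticVec hB ht),
    Pm_mulVec_of_transverse hN (by simp [acousticVec]; ring)]

theorem det_of_eigenvectors (s : ℝ) :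
    (of (eigenvectors γ B w1 w2 z1 z2 ξ1 ξ2 s)).det =
      2 * B * (1 - B) * (ξ1 ^ 2 + ξ2 ^ 2) ^ 3 * D3 γ B w1 w2 z1 z2 ξ1 ξ2 * s := by
  simp only [eigenvectors, det_succ_row_zero, Fin.sum_univ_succ, Fin.sum_univ_zero,
    submatrix_apply, of_apply, Fin.succ_succAbove_zero, Fin.succ_succAbove_succ,
    Fin.zero_succAbove, det_fin_zero, Fin.val_zero, Fin.val_succ, cons_val_zero, cons_val_succ,
    nullVec, shearVec, acousticVec, D3, D2]
  ring

end Eigenvectors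

theorem stmt12_general (γ B w1 w2 z1 z2 ξ1 ξ2 : ℝ) (hB0 : 0 < B) (hB1 : B < 1)
    (hξ : (ξ1, ξ2) ≠ (0, 0))
    (hD2 : 0 < D2 γ B z1 z2 ξ1 ξ2)
    (hD3 : D3 γ B w1 w2 z1 z2 ξ1 ξ2 ≠ 0) :
    ∃ V : Matrix (Fin 5) (Fin 5) ℝ, IsUnit V.det ∧
      V⁻¹ * (Pm ξ1 ξ2 * At γ B w1 w2 z1 z2 ξ1 ξ2) * V =
        Matrix.diagonal
          ![0,
            (w1 - B * z1) * ξ1 + (w2 - B * z2) * ξ2,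
            (w1 + (1 - B) * z1) * ξ1 + (w2 + (1 - B) * z2) * ξ2,
            (w1 + (1 - 2 * B) * z1) * ξ1 + (w2 + (1 - 2 * B) * z2) * ξ2
              - Real.sqrt ((1 - B) * D2 γ B z1 z2 ξ1 ξ2),
            (w1 + (1 - 2 * B) * z1) * ξ1 + (w2 + (1 - 2 * B) * z2) * ξ2
              + Real.sqrt ((1 - B) * D2 γ B z1 z2 ξ1 ξ2)] := by
  have hB : B ≠ 0 := hB0.ne'
  have hN : ξ1 ^ 2 + ξ2 ^ 2 ≠ 0 := fun h =>
    hξ (Prod.ext_iff.mpr (mul_self_add_mul_self_eq_zero.mp (by linear_combination h)))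
  have hK : 0 < (1 - B) * D2 γ B z1 z2 ξ1 ξ2 := mul_pos (by linarith) hD2
  set s := Real.sqrt ((1 - B) * D2 γ B z1 z2 ξ1 ξ2)
  have hs : s ≠ 0 := (Real.sqrt_pos.mpr hK).ne'
  have hs2 : s ^ 2 = (1 - B) * D2 γ B z1 z2 ξ1 ξ2 := Real.sq_sqrt hK.le
  have hv : IsUnit (of (eigenvectors γ B w1 w2 z1 z2 ξ1 ξ2 s)).det := by
    rw [det_of_eigenvectors]
    exact isUnit_iff_ne_zero.mpr (by simp [hB, sub_ne_zero.mpr hB1.ne', hN, hD3, hs])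
  refine ⟨_, by rwa [det_transpose], inv_mul_mul_eq_diagonal_of_mulVec_eq hv ?_⟩
  simp only [Fin.forall_fin_succ, IsEmpty.forall_iff, eigenvectors, cons_val_zero, cons_val_succ,
    and_true]
  refine ⟨?_, ?_, ?_, ?_, ?_⟩
  · rw [zero_smul, Pm_mul_At_mulVec_nullVec hB hN]
  · rw [Pm_mul_At_mulVec_shearVec hN (by ring)]
    congr 1
    ring
  · rw [Pm_mul_At_mulVec_shearVec hN (by ring)]
    congr 1
    ring
  · rw [Pm_mul_At_mulVec_acousticVec hB hN (by rw [neg_sq, hs2]), ← sub_eq_add_neg]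
  · exact Pm_mul_At_mulVec_acousticVec hB hN hs2

/-- Strong hyperbolicity of the projected symbol: under `Δ₁(ξ) ≠ 0`, `Δ₂(ξ) > 0`,
`Δ₃(ξ) ≠ 0`, the matrix `𝐏(ξ)Ã(ξ, v)` is diagonalizable over `ℝ`, with real eigenvalues
`0`, `(w−Bz)·ξ`, `(w+(1−B)z)·ξ`, `(w+(1−2B)z)·ξ ∓ √((1−B)Δ₂(ξ))`. -/
theorem stmt12 (γ B w1 w2 z1 z2 ξ1 ξ2 : ℝ) (hγ : 0 < γ) (hB0 : 0 < B) (hB1 : B < 1)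
    (hξ : (ξ1, ξ2) ≠ (0, 0))
    (hD1 : D1 γ B w1 w2 z1 z2 ξ1 ξ2 ≠ 0) (hD2 : 0 < D2 γ B z1 z2 ξ1 ξ2)
    (hD3 : D3 γ B w1 w2 z1 z2 ξ1 ξ2 ≠ 0) :
    ∃ V : Matrix (Fin 5) (Fin 5) ℝ, IsUnit V.det ∧
      V⁻¹ * (Pm ξ1 ξ2 * At γ B w1 w2 z1 z2 ξ1 ξ2) * V =
        Matrix.diagonal
          ![0,
            (w1 - B * z1) * ξ1 + (w2 - B * z2) * ξ2,
            (w1 + (1 - B) * z1) * ξ1 + (w2 + (1 - B) * z2) * ξ2,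
            (w1 + (1 - 2 * B) * z1) * ξ1 + (w2 + (1 - 2 * B) * z2) * ξ2
              - Real.sqrt ((1 - B) * D2 γ B z1 z2 ξ1 ξ2),
            (w1 + (1 - 2 * B) * z1) * ξ1 + (w2 + (1 - 2 * B) * z2) * ξ2
              + Real.sqrt ((1 - B) * D2 γ B z1 z2 ξ1 ξ2)] :=
  stmt12_general γ B w1 w2 z1 z2 ξ1 ξ2 hB0 hB1 hξ hD2 hD3
end

section
/- (The Leray projector symbol does not commute with the hyperbolic symbol.) Let γ > 0, v = (B, w, z) with B ≠ 0, and ξ ∈ ℝ² ∖ {0}. Then the first column of the commutator Ã(ξ, v)·𝐏(ξ) − 𝐏(ξ)·Ã(ξ, v) is the vector (0, b₁, b₂, 0, 0) with (b₁, b₂) = (γ|ξ|² + (1−2B)(z·ξ)²)·ξ/|ξ|². In particular, whenever γ|ξ|² + (1−2B)(z·ξ)² ≠ 0 one has Ã(ξ, v)𝐏(ξ) ≠ 𝐏(ξ)Ã(ξ, v), and the commutator is a homogeneous symbol of degree one in ξ. -/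
open Matrix

set_option maxHeartbeats 1000000 in
/-- The Leray projector symbol does not commute with the hyperbolic symbol: the first
column of `Ã(ξ, v)𝐏(ξ) − 𝐏(ξ)Ã(ξ, v)` is `(0, b₁, b₂, 0, 0)` with
`(b₁, b₂) = (γ|ξ|² + (1−2B)(z·ξ)²)·ξ/|ξ|²`; in particular the two symbols do not
commute whenever `γ|ξ|² + (1−2B)(z·ξ)² ≠ 0`, and the commutator is homogeneous of
degree one in `ξ`. -/
theorem stmt17 (γ B w1 w2 z1 z2 ξ1 ξ2 : ℝ) (hγ : 0 < γ) (hB : B ≠ 0)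
    (hξ : (ξ1, ξ2) ≠ (0, 0)) :
    ((At γ B w1 w2 z1 z2 ξ1 ξ2 * Pm ξ1 ξ2 - Pm ξ1 ξ2 * At γ B w1 w2 z1 z2 ξ1 ξ2) 0 0
        = 0 ∧
      (At γ B w1 w2 z1 z2 ξ1 ξ2 * Pm ξ1 ξ2 - Pm ξ1 ξ2 * At γ B w1 w2 z1 z2 ξ1 ξ2) 1 0
        = (γ * (ξ1 ^ 2 + ξ2 ^ 2) + (1 - 2 * B) * (z1 * ξ1 + z2 * ξ2) ^ 2) * ξ1 /
            (ξ1 ^ 2 + ξ2 ^ 2) ∧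
      (At γ B w1 w2 z1 z2 ξ1 ξ2 * Pm ξ1 ξ2 - Pm ξ1 ξ2 * At γ B w1 w2 z1 z2 ξ1 ξ2) 2 0
        = (γ * (ξ1 ^ 2 + ξ2 ^ 2) + (1 - 2 * B) * (z1 * ξ1 + z2 * ξ2) ^ 2) * ξ2 /
            (ξ1 ^ 2 + ξ2 ^ 2) ∧
      (At γ B w1 w2 z1 z2 ξ1 ξ2 * Pm ξ1 ξ2 - Pm ξ1 ξ2 * At γ B w1 w2 z1 z2 ξ1 ξ2) 3 0
        = 0 ∧
      (At γ B w1 w2 z1 z2 ξ1 ξ2 * Pm ξ1 ξ2 - Pm ξ1 ξ2 * At γ B w1 w2 z1 z2 ξ1 ξ2) 4 0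
        = 0) ∧
    (γ * (ξ1 ^ 2 + ξ2 ^ 2) + (1 - 2 * B) * (z1 * ξ1 + z2 * ξ2) ^ 2 ≠ 0 →
      At γ B w1 w2 z1 z2 ξ1 ξ2 * Pm ξ1 ξ2 ≠ Pm ξ1 ξ2 * At γ B w1 w2 z1 z2 ξ1 ξ2) ∧
    (∀ t : ℝ, 0 < t →
      At γ B w1 w2 z1 z2 (t * ξ1) (t * ξ2) * Pm (t * ξ1) (t * ξ2) -
          Pm (t * ξ1) (t * ξ2) * At γ B w1 w2 z1 z2 (t * ξ1) (t * ξ2) =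
        t • (At γ B w1 w2 z1 z2 ξ1 ξ2 * Pm ξ1 ξ2 -
          Pm ξ1 ξ2 * At γ B w1 w2 z1 z2 ξ1 ξ2)) := by
  have hS : ξ1 ^ 2 + ξ2 ^ 2 ≠ 0 := by
    intro h
    have h1 : ξ1 = 0 := by nlinarith [sq_nonneg ξ1, sq_nonneg ξ2]
    have h2 : ξ2 = 0 := by nlinarith [sq_nonneg ξ1, sq_nonneg ξ2]
    exact hξ (by simp [h1, h2])
  have e0 : (At γ B w1 w2 z1 z2 ξ1 ξ2 * Pm ξ1 ξ2 - Pm ξ1 ξ2 * At γ B w1 w2 z1 z2 ξ1 ξ2) 0 0 = 0 := by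
    simp [At, At1, At2, Pm, Matrix.mul_apply, Fin.sum_univ_five, Matrix.sub_apply,
      Matrix.add_apply, Matrix.smul_apply]
  have e1 : (At γ B w1 w2 z1 z2 ξ1 ξ2 * Pm ξ1 ξ2 - Pm ξ1 ξ2 * At γ B w1 w2 z1 z2 ξ1 ξ2) 1 0
      = (γ * (ξ1 ^ 2 + ξ2 ^ 2) + (1 - 2 * B) * (z1 * ξ1 + z2 * ξ2) ^ 2) * ξ1 / (ξ1 ^ 2 + ξ2 ^ 2) := by
    simp [At, At1, At2, Pm, Matrix.mul_apply, Fin.sum_univ_five, Matrix.sub_apply,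
      Matrix.add_apply, Matrix.smul_apply]
    field_simp
    ring
  have e2 : (At γ B w1 w2 z1 z2 ξ1 ξ2 * Pm ξ1 ξ2 - Pm ξ1 ξ2 * At γ B w1 w2 z1 z2 ξ1 ξ2) 2 0
      = (γ * (ξ1 ^ 2 + ξ2 ^ 2) + (1 - 2 * B) * (z1 * ξ1 + z2 * ξ2) ^ 2) * ξ2 / (ξ1 ^ 2 + ξ2 ^ 2) := by
    simp [At, At1, At2, Pm, Matrix.mul_apply, Fin.sum_univ_five, Matrix.sub_apply,
      Matrix.add_apply, Matrix.smul_apply]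
    field_simp
    ring
  have e3 : (At γ B w1 w2 z1 z2 ξ1 ξ2 * Pm ξ1 ξ2 - Pm ξ1 ξ2 * At γ B w1 w2 z1 z2 ξ1 ξ2) 3 0 = 0 := by
    simp [At, At1, At2, Pm, Matrix.mul_apply, Fin.sum_univ_five, Matrix.sub_apply,
      Matrix.add_apply, Matrix.smul_apply]
  have e4 : (At γ B w1 w2 z1 z2 ξ1 ξ2 * Pm ξ1 ξ2 - Pm ξ1 ξ2 * At γ B w1 w2 z1 z2 ξ1 ξ2) 4 0 = 0 := by
    simp [At, At1, At2, Pm, Matrix.mul_apply, Fin.sum_univ_five, Matrix.sub_apply,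
      Matrix.add_apply, Matrix.smul_apply]
  refine ⟨⟨e0, e1, e2, e3, e4⟩, ?_, ?_⟩
  · intro hC heq
    have hz : At γ B w1 w2 z1 z2 ξ1 ξ2 * Pm ξ1 ξ2 - Pm ξ1 ξ2 * At γ B w1 w2 z1 z2 ξ1 ξ2 = 0 := by
      rw [heq]; simp
    have h1 : (γ * (ξ1 ^ 2 + ξ2 ^ 2) + (1 - 2 * B) * (z1 * ξ1 + z2 * ξ2) ^ 2) * ξ1 /
        (ξ1 ^ 2 + ξ2 ^ 2) = 0 := by rw [← e1, hz]; simp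
    have h2 : (γ * (ξ1 ^ 2 + ξ2 ^ 2) + (1 - 2 * B) * (z1 * ξ1 + z2 * ξ2) ^ 2) * ξ2 /
        (ξ1 ^ 2 + ξ2 ^ 2) = 0 := by rw [← e2, hz]; simp
    have hξ1 : ξ1 = 0 :=
      (mul_eq_zero.mp ((div_eq_zero_iff.mp h1).resolve_right hS)).resolve_left hC
    have hξ2 : ξ2 = 0 :=
      (mul_eq_zero.mp ((div_eq_zero_iff.mp h2).resolve_right hS)).resolve_left hC
    exact hξ (by simp [hξ1, hξ2])
  · intro t ht
    have ht' : t ≠ 0 := ne_of_gt ht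
    have hden : (t * ξ1) ^ 2 + (t * ξ2) ^ 2 ≠ 0 := by
      rw [show (t * ξ1) ^ 2 + (t * ξ2) ^ 2 = t ^ 2 * (ξ1 ^ 2 + ξ2 ^ 2) from by ring]
      exact mul_ne_zero (pow_ne_zero 2 ht') hS
    have k1 : (t * ξ1) ^ 2 / ((t * ξ1) ^ 2 + (t * ξ2) ^ 2) = ξ1 ^ 2 / (ξ1 ^ 2 + ξ2 ^ 2) := by
      rw [div_eq_div_iff hden hS]; ring
    have k2 : (t * ξ2) ^ 2 / ((t * ξ1) ^ 2 + (t * ξ2) ^ 2) = ξ2 ^ 2 / (ξ1 ^ 2 + ξ2 ^ 2) := by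
      rw [div_eq_div_iff hden hS]; ring
    have k3 : -(t * ξ1 * (t * ξ2)) / ((t * ξ1) ^ 2 + (t * ξ2) ^ 2)
        = -(ξ1 * ξ2) / (ξ1 ^ 2 + ξ2 ^ 2) := by
      rw [div_eq_div_iff hden hS]; ring
    have hP : Pm (t * ξ1) (t * ξ2) = Pm ξ1 ξ2 := by
      unfold Pm
      simp only [k1, k2, k3]
    have hA : At γ B w1 w2 z1 z2 (t * ξ1) (t * ξ2) = t • At γ B w1 w2 z1 z2 ξ1 ξ2 := by
      simp [At, smul_smul, smul_add]
    rw [hA, hP, Matrix.smul_mul, Matrix.mul_smul, smul_sub]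
end

section
/- (Degeneracy of the eigenvector matrix in three space dimensions.) Let γ > 0 and 0 < B̄ < 1, and for ξ = (ξ₁, ξ₂, ξ₃) ∈ ℝ³ ∖ {0} let V̂(ξ) be the 7×7 real matrix whose rows are: (0, 0, 0, 0, 0, B̄√((1−B̄)/γ)·|ξ|, −B̄√((1−B̄)/γ)·|ξ|), (−(1−B̄)ξ₁, (1−B̄)ξ₂, (1−B̄)ξ₃, −B̄ξ₂, −B̄ξ₃, 0, 0), (−(1−B̄)ξ₂, −(1−B̄)ξ₁, 0, B̄ξ₁, 0, 0, 0), (−(1−B̄)ξ₃, 0, −(1−B̄)ξ₁, 0, B̄ξ₁, 0, 0), (ξ₁, −ξ₂, −ξ₃, −ξ₂, −ξ₃, ξ₁, ξ₁), (ξ₂, ξ₁, 0, ξ₁, 0, ξ₂, ξ₂), (ξ₃, 0, ξ₁, 0, ξ₁, ξ₃, ξ₃). Then for every ξ with ξ₁ = 0 and (ξ₂, ξ₃) ≠ (0,0), the second and third columns of V̂(ξ) are linearly dependent (indeed ξ₃·(column 2) = ξ₂·(column 3)), hence det V̂(ξ) = 0 and the columns of V̂(ξ) do not form a basis of ℝ⁷.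 -/
open Matrix

/-- The eigenvector matrix (times `|ξ|`) of the Leray-projected symbol of the
three-dimensional two-phase model, evaluated at the equilibrium point `v̄ = (B̄, 0, 0)`. -/
noncomputable def Vhat (γ Bb ξ1 ξ2 ξ3 : ℝ) : Matrix (Fin 7) (Fin 7) ℝ :=
  !![0, 0, 0, 0, 0,
       Bb * Real.sqrt ((1 - Bb) / γ) * Real.sqrt (ξ1 ^ 2 + ξ2 ^ 2 + ξ3 ^ 2),
       -(Bb * Real.sqrt ((1 - Bb) / γ) * Real.sqrt (ξ1 ^ 2 + ξ2 ^ 2 + ξ3 ^ 2));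
     -((1 - Bb) * ξ1), (1 - Bb) * ξ2, (1 - Bb) * ξ3, -(Bb * ξ2), -(Bb * ξ3), 0, 0;
     -((1 - Bb) * ξ2), -((1 - Bb) * ξ1), 0, Bb * ξ1, 0, 0, 0;
     -((1 - Bb) * ξ3), 0, -((1 - Bb) * ξ1), 0, Bb * ξ1, 0, 0;
     ξ1, -ξ2, -ξ3, -ξ2, -ξ3, ξ1, ξ1;
     ξ2, ξ1, 0, ξ1, 0, ξ2, ξ2;
     ξ3, 0, ξ1, 0, ξ1, ξ3, ξ3]


private lemma consVal5 {α : Type*} (a : α) (u : Fin 6 → α) : Matrix.vecCons a u 5 = u 4 := rfl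
private lemma consVal6 {α : Type*} (a : α) (u : Fin 6 → α) : Matrix.vecCons a u 6 = u 5 := rfl
private lemma consVal4' {α : Type*} (a : α) (u : Fin 5 → α) : Matrix.vecCons a u 4 = u 3 := rfl
private lemma consVal5' {α : Type*} (a : α) (u : Fin 5 → α) : Matrix.vecCons a u 5 = u 4 := rfl
private lemma consVal3'' {α : Type*} (a : α) (u : Fin 4 → α) : Matrix.vecCons a u 3 = u 2 := rfl
private lemma consVal4'' {α : Type*} (a : α) (u : Fin 4 → α) : Matrix.vecCons a u 4 = u 3 := rfl
private lemma consVal2₃ {α : Type*} (a : α) (u : Fin 3 → α) : Matrix.vecCons a u 2 = u 1 := rfl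
private lemma consVal3₃ {α : Type*} (a : α) (u : Fin 3 → α) : Matrix.vecCons a u 3 = u 2 := rfl
private lemma consVal1₂ {α : Type*} (a : α) (u : Fin 2 → α) : Matrix.vecCons a u 1 = u 0 := rfl
private lemma consVal2₂ {α : Type*} (a : α) (u : Fin 2 → α) : Matrix.vecCons a u 2 = u 1 := rfl
private lemma consVal1₁ {α : Type*} (a : α) (u : Fin 1 → α) : Matrix.vecCons a u 1 = u 0 := rfl

/-- Degeneracy of the eigenvector matrix in three space dimensions: on the plane
`ξ₁ = 0` (with `(ξ₂, ξ₃) ≠ (0,0)`) the second and third columns of `V̂(ξ)` are linearly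
dependent (`ξ₃·(column 2) = ξ₂·(column 3)`), hence `det V̂(ξ) = 0` and the columns of
`V̂(ξ)` do not form a basis of `ℝ⁷`. -/
theorem stmt18 (γ Bb : ℝ) (hγ : 0 < γ) (hB0 : 0 < Bb) (hB1 : Bb < 1)
    (ξ2 ξ3 : ℝ) (hξ : (ξ2, ξ3) ≠ (0, 0)) :
    (∀ i : Fin 7, ξ3 * Vhat γ Bb 0 ξ2 ξ3 i 1 = ξ2 * Vhat γ Bb 0 ξ2 ξ3 i 2) ∧
    (Vhat γ Bb 0 ξ2 ξ3).det = 0 ∧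
    ¬ LinearIndependent ℝ (fun j : Fin 7 => (Vhat γ Bb 0 ξ2 ξ3)ᵀ j) := by
  set M := Vhat γ Bb 0 ξ2 ξ3 with hM
  have hcol : ∀ i : Fin 7, ξ3 * M i 1 = ξ2 * M i 2 := by
    intro i
    fin_cases i <;>
      simp [hM, Vhat, Matrix.cons_val_zero, Matrix.cons_val_succ', Matrix.cons_val_one,
        Matrix.head_cons, consVal5, consVal6, consVal4', consVal5', consVal3'', consVal4'',
        consVal2₃, consVal3₃, consVal1₂, consVal2₂, consVal1₁, Matrix.vecHead, Matrix.vecTail] <;>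
      ring

  set v : Fin 7 → ℝ := fun j => if j = 1 then ξ3 else if j = 2 then -ξ2 else 0 with hv
  have hvne : v ≠ 0 := by
    intro h
    apply hξ
    have h1 := congrFun h (1 : Fin 7)
    have h2 := congrFun h (2 : Fin 7)
    simp [hv] at h1 h2
    simp [h1, h2]
  have hmv : M.mulVec v = 0 := by
    funext i
    have := hcol i
    simp only [Matrix.mulVec, dotProduct, hv]
    rw [Fin.sum_univ_seven]
    simp
    linarith
  refine ⟨hcol, ?_, ?_⟩
  · exact (Matrix.exists_mulVec_eq_zero_iff).mp ⟨v, hvne, hmv⟩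
  · rw [Fintype.linearIndependent_iff]
    push_neg
    refine ⟨v, ?_, ?_⟩
    · funext i
      have := congrFun hmv i
      simp only [Matrix.mulVec, dotProduct] at this
      simpa [Matrix.transpose_apply, Finset.sum_apply, mul_comm] using this
    · by_cases h2 : ξ2 = 0
      · have h3 : ξ3 ≠ 0 := by
          intro h3; exact hξ (by simp [h2, h3])
        exact ⟨1, by simp [hv, h3]⟩
      · exact ⟨2, by simp [hv, h2]⟩
end
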